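/- Let N ≥ 3, let λ be a smooth totally antisymmetric tensor field on ℝ^N satisfying the algebraic condition λ_{nij}λ_{mkp} + λ_{njk}λ_{mip} + λ_{nki}λ_{mjp} + λ_{mij}λ_{nkp} + λ_{mjk}λ_{nip} + λ_{mki}λ_{njp} = 0 and the differential condition Σ_i λ_{ijk} ∂λ_{mnp}/∂z_i = Σ_i (λ_{inp} ∂λ_{mjk}/∂z_i + λ_{ipm} ∂λ_{njk}/∂z_i + λ_{imn} ∂λ_{pjk}/∂z_i) at every point, and let C : ℝ^N → ℝ be a smooth function. Then the matrix field J_{ij}(z) = Σ_k λ_{ijk}(z) ∂C/∂z_k is antisymmetric and satisfies the Jacobi condition Σ_l (J_{il} ∂J_{jk}/∂z_l + J_{kl} ∂J_{ij}/∂z_l + J_{jl} ∂J_{ki}/∂z_l) = 0 for all i,j,k; hence the bracket {A,B}_C = {A,B,C} is a Poisson bracket. -/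

import Mathlib

/-- Partial derivative of `f` at `z` in the `i`-th coordinate direction of `ℝ^N`. -/
noncomputable def pd {N : ℕ} (f : (Fin N → ℝ) → ℝ) (i : Fin N) (z : Fin N → ℝ) : ℝ :=
  fderiv ℝ f z (Pi.single i 1)

/-- Tri-linear bracket `{A,B,C}(z) = Σ_{i,j,k} λ_{ijk}(z) ∂_i A ∂_j B ∂_k C` associated to
the tensor field `lam`. -/
noncomputable def nambu {N : ℕ} (lam : Fin N → Fin N → Fin N → (Fin N → ℝ) → ℝ)
    (A B C : (Fin N → ℝ) → ℝ) (z : Fin N → ℝ) : ℝ :=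
  ∑ i : Fin N, ∑ j : Fin N, ∑ k : Fin N,
    lam i j k z * pd A i z * pd B j z * pd C k z

/-- Total antisymmetry of a tensor field: it changes sign under transposition of any two
of its three indices. -/
def TotallyAntisym {N : ℕ} (lam : Fin N → Fin N → Fin N → (Fin N → ℝ) → ℝ) : Prop :=
  ∀ (i j k : Fin N) (z : Fin N → ℝ),
    lam i j k z = - lam j i k z ∧ lam i j k z = - lam i k j z ∧ lam i j k z = - lam k j i z

/-- The pointwise algebraic condition on the Nambu tensor coming from the fundamental
identity. -/
def AlgCond {N : ℕ} (lam : Fin N → Fin N → Fin N → (Fin N → ℝ) → ℝ) : Prop :=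
  ∀ (z : Fin N → ℝ) (i j k m n p : Fin N),
    lam n i j z * lam m k p z + lam n j k z * lam m i p z + lam n k i z * lam m j p z
      + lam m i j z * lam n k p z + lam m j k z * lam n i p z + lam m k i z * lam n j p z = 0

/-- The differential condition on the Nambu tensor coming from the fundamental identity. -/
def DiffCond {N : ℕ} (lam : Fin N → Fin N → Fin N → (Fin N → ℝ) → ℝ) : Prop :=
  ∀ (z : Fin N → ℝ) (j k m n p : Fin N),
    ∑ i : Fin N, lam i j k z * pd (lam m n p) i z
      = ∑ i : Fin N, (lam i n p z * pd (lam m j k) i z + lam i p m z * pd (lam n j k) i z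
          + lam i m n z * pd (lam p j k) i z)

/-- The fundamental identity for the tri-linear bracket associated to `lam`, required for
all smooth observables. -/
def FundId {N : ℕ} (lam : Fin N → Fin N → Fin N → (Fin N → ℝ) → ℝ) : Prop :=
  ∀ A B C D E : (Fin N → ℝ) → ℝ,
    ContDiff ℝ (⊤ : ℕ∞) A → ContDiff ℝ (⊤ : ℕ∞) B → ContDiff ℝ (⊤ : ℕ∞) C → ContDiff ℝ (⊤ : ℕ∞) D → ContDiff ℝ (⊤ : ℕ∞) E →
    ∀ z : Fin N → ℝ,
      nambu lam (nambu lam A B C) D E z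
        = nambu lam (nambu lam A D E) B C z + nambu lam A (nambu lam B D E) C z
          + nambu lam A B (nambu lam C D E) z

lemma pd_sum {N : ℕ} {κ : Type*} (s : Finset κ) (f : κ → (Fin N → ℝ) → ℝ) (i : Fin N)
    (z : Fin N → ℝ) (h : ∀ x ∈ s, DifferentiableAt ℝ (f x) z) :
    pd (fun w => ∑ x ∈ s, f x w) i z = ∑ x ∈ s, pd (f x) i z := by
  simp only [pd]
  rw [fderiv_fun_sum h]
  simp

lemma pd_mul {N : ℕ} (f g : (Fin N → ℝ) → ℝ) (i : Fin N) (z : Fin N → ℝ)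
    (hf : DifferentiableAt ℝ f z) (hg : DifferentiableAt ℝ g z) :
    pd (fun w => f w * g w) i z = pd f i z * g z + f z * pd g i z := by
  simp only [pd]
  rw [fderiv_fun_mul hf hg]
  simp
  ring

lemma pd_neg {N : ℕ} (f : (Fin N → ℝ) → ℝ) (i : Fin N) (z : Fin N → ℝ) :
    pd (fun w => -f w) i z = -pd f i z := by
  simp only [pd, fderiv_neg]
  simp

lemma contDiff_pd {N : ℕ} (f : (Fin N → ℝ) → ℝ) (hf : ContDiff ℝ (⊤ : ℕ∞) f) (q : Fin N) :
    ContDiff ℝ (⊤ : ℕ∞) (pd f q) := by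
  have : pd f q = fun z => (fderiv ℝ f z) (Pi.single q 1) := rfl
  rw [this]
  exact (hf.fderiv_right (by simp)).clm_apply contDiff_const

lemma pd_pd_symm {N : ℕ} (f : (Fin N → ℝ) → ℝ) (hf : ContDiff ℝ (⊤ : ℕ∞) f) (z : Fin N → ℝ)
    (a b : Fin N) : pd (pd f a) b z = pd (pd f b) a z := by
  have hd : DifferentiableAt ℝ (fderiv ℝ f) z :=
    ((hf.fderiv_right (by exact WithTop.coe_le_coe.mpr le_top)).differentiable (by simp : (1 : WithTop ℕ∞) ≠ 0)) z
  have h1 : ∀ (v : Fin N → ℝ) (b : Fin N),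
      fderiv ℝ (fun w => fderiv ℝ f w v) z (Pi.single b 1)
        = fderiv ℝ (fderiv ℝ f) z (Pi.single b 1) v := by
    intro v b
    rw [fderiv_clm_apply hd (differentiableAt_const v)]
    simp
  have hsymm : IsSymmSndFDerivAt ℝ f z := hf.contDiffAt.isSymmSndFDerivAt (by rw [minSmoothness_of_isRCLikeNormedField]; exact WithTop.coe_le_coe.mpr (le_top : (2 : ℕ∞) ≤ ⊤))
  show fderiv ℝ (fun w => fderiv ℝ f w (Pi.single a 1)) z (Pi.single b 1)
      = fderiv ℝ (fun w => fderiv ℝ f w (Pi.single b 1)) z (Pi.single a 1)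
  rw [h1, h1]
  exact hsymm _ _

lemma sum_antisym_zero {N : ℕ} (f : Fin N → Fin N → ℝ) (hf : ∀ a b, f a b = - f b a) :
    ∑ a : Fin N, ∑ b : Fin N, f a b = 0 := by
  have h : ∑ a : Fin N, ∑ b : Fin N, f a b = -∑ a : Fin N, ∑ b : Fin N, f a b := by
    calc ∑ a : Fin N, ∑ b : Fin N, f a b = ∑ b : Fin N, ∑ a : Fin N, f a b :=
          Finset.sum_comm
      _ = ∑ b : Fin N, ∑ a : Fin N, -f b a :=
          Finset.sum_congr rfl fun b _ => Finset.sum_congr rfl fun a _ => hf a b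
      _ = -∑ a : Fin N, ∑ b : Fin N, f a b := by
          simp
  linarith

lemma sum_rot3 {N : ℕ} (f : Fin N → Fin N → Fin N → ℝ) :
    ∑ a : Fin N, ∑ b : Fin N, ∑ l : Fin N, f a b l
      = ∑ a : Fin N, ∑ b : Fin N, ∑ l : Fin N, f b l a := by
  calc ∑ a : Fin N, ∑ b : Fin N, ∑ l : Fin N, f a b l
      = ∑ a : Fin N, ∑ l : Fin N, ∑ b : Fin N, f a b l :=
        Finset.sum_congr rfl fun a _ => Finset.sum_comm
    _ = ∑ l : Fin N, ∑ a : Fin N, ∑ b : Fin N, f a b l := Finset.sum_comm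

lemma sum_scale {N : ℕ} (x y : ℝ) (f : Fin N → ℝ) :
    (∑ b : Fin N, x * f b * y) = x * (∑ b : Fin N, f b) * y := by
  rw [Finset.mul_sum, Finset.sum_mul]

lemma sum4_cin {N : ℕ} (f : Fin N → Fin N → Fin N → Fin N → ℝ) :
    (∑ c : Fin N, ∑ a : Fin N, ∑ b : Fin N, ∑ t : Fin N, f c a b t)
      = ∑ a : Fin N, ∑ b : Fin N, ∑ t : Fin N, ∑ c : Fin N, f c a b t := by
  calc (∑ c : Fin N, ∑ a : Fin N, ∑ b : Fin N, ∑ t : Fin N, f c a b t)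
      = ∑ a : Fin N, ∑ c : Fin N, ∑ b : Fin N, ∑ t : Fin N, f c a b t := Finset.sum_comm
    _ = ∑ a : Fin N, ∑ b : Fin N, ∑ c : Fin N, ∑ t : Fin N, f c a b t :=
        Finset.sum_congr rfl fun a _ => Finset.sum_comm
    _ = ∑ a : Fin N, ∑ b : Fin N, ∑ t : Fin N, ∑ c : Fin N, f c a b t :=
        Finset.sum_congr rfl fun a _ => Finset.sum_congr rfl fun b _ => Finset.sum_comm

/-- from a smooth totally antisymmetric tensor field satisfying the algebraic
and differential conditions and a smooth function `Cas`, the matrix field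
`J_{ij}(z) = Σ_k λ_{ijk}(z) ∂Cas/∂z_k` is antisymmetric and satisfies the Jacobi
condition; hence the bracket `{A,B}_Cas = {A,B,Cas}` is a Poisson bracket (it satisfies
the Jacobi identity). -/
theorem statement5 (N : ℕ) (hN : 3 ≤ N)
    (lam : Fin N → Fin N → Fin N → (Fin N → ℝ) → ℝ)
    (hsmooth : ∀ i j k, ContDiff ℝ (⊤ : ℕ∞) (lam i j k))
    (hanti : TotallyAntisym lam)
    (h1 : AlgCond lam) (h2 : DiffCond lam)
    (Cas : (Fin N → ℝ) → ℝ) (hCas : ContDiff ℝ (⊤ : ℕ∞) Cas)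
    (J : Fin N → Fin N → (Fin N → ℝ) → ℝ)
    (hJ : ∀ i j z, J i j z = ∑ k : Fin N, lam i j k z * pd Cas k z) :
    (∀ (i j : Fin N) (z : Fin N → ℝ), J i j z = - J j i z) ∧
    (∀ (z : Fin N → ℝ) (i j k : Fin N),
      ∑ l : Fin N, (J i l z * pd (J j k) l z + J k l z * pd (J i j) l z
        + J j l z * pd (J k i) l z) = 0) ∧
    (∀ A B D : (Fin N → ℝ) → ℝ, ContDiff ℝ (⊤ : ℕ∞) A → ContDiff ℝ (⊤ : ℕ∞) B → ContDiff ℝ (⊤ : ℕ∞) D →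
      ∀ z : Fin N → ℝ,
        nambu lam (nambu lam A B Cas) D Cas z + nambu lam (nambu lam D A Cas) B Cas z
          + nambu lam (nambu lam B D Cas) A Cas z = 0) := by
  have hswap12 : ∀ (a b c : Fin N) (w : Fin N → ℝ), lam a b c w = -lam b a c w :=
    fun a b c w => (hanti a b c w).1
  have hswap23 : ∀ (a b c : Fin N) (w : Fin N → ℝ), lam a b c w = -lam a c b w :=
    fun a b c w => (hanti a b c w).2.1
  have hcyc : ∀ (a b c : Fin N) (w : Fin N → ℝ), lam a b c w = lam b c a w := by
    intro a b c w
    rw [hswap12 a b c w, hswap23 b a c w]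
    ring
  have hpd12 : ∀ (a b c l : Fin N) (w : Fin N → ℝ),
      pd (lam a b c) l w = -pd (lam b a c) l w := by
    intro a b c l w
    have hfn : lam a b c = fun w' => -lam b a c w' := funext fun w' => hswap12 a b c w'
    rw [hfn, pd_neg]
  have hpd13 : ∀ (a b c l : Fin N) (w : Fin N → ℝ),
      pd (lam a b c) l w = -pd (lam c b a) l w := by
    intro a b c l w
    have hfn : lam a b c = fun w' => -lam c b a w' := funext fun w' => (hanti a b c w').2.2
    rw [hfn, pd_neg]
  have hdl : ∀ (a b c : Fin N) (w : Fin N → ℝ), DifferentiableAt ℝ (lam a b c) w :=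
    fun a b c w => ((hsmooth a b c).differentiable (by simp)) w
  have hCsm : ∀ q, ContDiff ℝ (⊤ : ℕ∞) (pd Cas q) := fun q => contDiff_pd Cas hCas q
  have hCd : ∀ (q : Fin N) (w : Fin N → ℝ), DifferentiableAt ℝ (pd Cas q) w :=
    fun q w => ((hCsm q).differentiable (by simp)) w
  have hJfun : ∀ a b, J a b = fun w => ∑ q : Fin N, lam a b q w * pd Cas q w :=
    fun a b => funext fun w => hJ a b w
  have hJsm : ∀ a b, ContDiff ℝ (⊤ : ℕ∞) (J a b) := by
    intro a b
    rw [hJfun a b]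
    exact ContDiff.sum fun q _ => (hsmooth a b q).mul (hCsm q)
  have hJd : ∀ (a b : Fin N) (w : Fin N → ℝ), DifferentiableAt ℝ (J a b) w :=
    fun a b w => ((hJsm a b).differentiable (by simp)) w
  have hpdJ : ∀ (a b l : Fin N) (w : Fin N → ℝ),
      pd (J a b) l w = ∑ q : Fin N,
        (pd (lam a b q) l w * pd Cas q w + lam a b q w * pd (pd Cas q) l w) := by
    intro a b l w
    rw [hJfun a b]
    rw [pd_sum Finset.univ (fun q => fun w' => lam a b q w' * pd Cas q w') l w
      (fun q _ => (hdl a b q w).mul (hCd q w))]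
    exact Finset.sum_congr rfl fun q _ =>
      pd_mul (lam a b q) (pd Cas q) l w (hdl a b q w) (hCd q w)
  have part1 : ∀ (i j : Fin N) (w : Fin N → ℝ), J i j w = -J j i w := by
    intro i j w
    rw [hJ i j w, hJ j i w, ← Finset.sum_neg_distrib]
    exact Finset.sum_congr rfl fun k _ => by rw [hswap12 i j k w]; ring
  have part2 : ∀ (z : Fin N → ℝ) (i j k : Fin N),
      ∑ l : Fin N, (J i l z * pd (J j k) l z + J k l z * pd (J i j) l z
        + J j l z * pd (J k i) l z) = 0 := by
    intro z i j k
    -- key differential identity from DiffCond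
    have key : ∀ p q : Fin N,
        (∑ l : Fin N, (lam i l p z * pd (lam j k q) l z + lam k l p z * pd (lam i j q) l z
          + lam j l p z * pd (lam k i q) l z))
        = -(∑ l : Fin N, (lam i l q z * pd (lam j k p) l z + lam k l q z * pd (lam i j p) l z
          + lam j l q z * pd (lam k i p) l z)) := by
      intro p q
      have conv : ∀ a b c d e : Fin N,
          (∑ l : Fin N, lam a l b z * pd (lam c d e) l z)
            = -∑ l : Fin N, lam l a b z * pd (lam c d e) l z := by
        intro a b c d e
        rw [← Finset.sum_neg_distrib]
        exact Finset.sum_congr rfl fun l _ => by rw [hswap12 a l b z]; ring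
      have dpd : ∀ a b c d e : Fin N,
          (∑ l : Fin N, lam l a b z * pd (lam c d e) l z)
            = -∑ l : Fin N, lam l a b z * pd (lam d c e) l z := by
        intro a b c d e
        rw [← Finset.sum_neg_distrib]
        exact Finset.sum_congr rfl fun l _ => by rw [hpd12 c d e l z]; ring
      have dpd13 : ∀ a b c d e : Fin N,
          (∑ l : Fin N, lam l a b z * pd (lam c d e) l z)
            = -∑ l : Fin N, lam l a b z * pd (lam e d c) l z := by
        intro a b c d e
        rw [← Finset.sum_neg_distrib]
        exact Finset.sum_congr rfl fun l _ => by rw [hpd13 c d e l z]; ring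
      have dlam23 : ∀ a b c d e : Fin N,
          (∑ l : Fin N, lam l a b z * pd (lam c d e) l z)
            = -∑ l : Fin N, lam l b a z * pd (lam c d e) l z := by
        intro a b c d e
        rw [← Finset.sum_neg_distrib]
        exact Finset.sum_congr rfl fun l _ => by rw [hswap23 l a b z]; ring
      have hA := h2 z i p j k q
      have hB := h2 z i q j k p
      simp only [Finset.sum_add_distrib] at hA hB ⊢
      linarith [hA, hB, conv i p j k q, conv k p i j q, conv j p k i q,
        conv i q j k p, conv k q i j p, conv j q k i p,
        dpd k q j i p, dlam23 q j k i p, dpd13 j k q i p,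
        dpd k p j i q, dlam23 p j k i q]
    -- pointwise algebraic identity
    have hX : ∀ l p q : Fin N,
        (lam i l p z * lam j k q z + lam k l p z * lam i j q z + lam j l p z * lam k i q z)
        + (lam i q p z * lam j k l z + lam k q p z * lam i j l z + lam j q p z * lam k i l z)
        = 0 := by
      intro l p q
      have t1 : lam i l p z * lam j k q z = lam l p i z * lam q j k z := by
        rw [hcyc i l p z, ← hcyc q j k z]
      have t2 : lam k l p z * lam i j q z = lam l p k z * lam q i j z := by
        rw [hcyc k l p z, ← hcyc q i j z]
      have t3 : lam j l p z * lam k i q z = lam l j p z * lam q i k z := by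
        rw [hswap12 j l p z, hcyc k i q z, hcyc i q k z, hswap23 q k i z]
        ring
      have t4 : lam i q p z * lam j k l z = lam q p i z * lam l j k z := by
        rw [hcyc i q p z, ← hcyc l j k z]
      have t5 : lam k q p z * lam i j l z = lam q p k z * lam l i j z := by
        rw [hcyc k q p z, ← hcyc l i j z]
      have t6 : lam j q p z * lam k i l z = lam q j p z * lam l i k z := by
        rw [hswap12 j q p z, hcyc k i l z, hcyc i l k z, hswap23 l k i z]
        ring
      have halg := h1 z p i j q l k
      linear_combination halg + t1 + t2 + t3 + t4 + t5 + t6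
    -- expansion of the Jacobi sum
    have expand : (∑ l : Fin N, (J i l z * pd (J j k) l z + J k l z * pd (J i j) l z
          + J j l z * pd (J k i) l z))
        = ∑ l : Fin N, ∑ p : Fin N, ∑ q : Fin N,
          (pd Cas p z * pd Cas q z *
            (lam i l p z * pd (lam j k q) l z + lam k l p z * pd (lam i j q) l z
              + lam j l p z * pd (lam k i q) l z)
          + pd Cas p z * pd (pd Cas q) l z *
            (lam i l p z * lam j k q z + lam k l p z * lam i j q z
              + lam j l p z * lam k i q z)) := by
      refine Finset.sum_congr rfl fun l _ => ?_
      rw [hJ i l z, hJ k l z, hJ j l z, hpdJ j k l z, hpdJ i j l z, hpdJ k i l z]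
      rw [Finset.sum_mul_sum, Finset.sum_mul_sum, Finset.sum_mul_sum]
      rw [← Finset.sum_add_distrib, ← Finset.sum_add_distrib]
      refine Finset.sum_congr rfl fun p _ => ?_
      rw [← Finset.sum_add_distrib, ← Finset.sum_add_distrib]
      refine Finset.sum_congr rfl fun q _ => ?_
      ring
    have hG1 : (∑ l : Fin N, ∑ p : Fin N, ∑ q : Fin N,
        (pd Cas p z * pd Cas q z *
          (lam i l p z * pd (lam j k q) l z + lam k l p z * pd (lam i j q) l z
            + lam j l p z * pd (lam k i q) l z))) = 0 := by
      have step : (∑ l : Fin N, ∑ p : Fin N, ∑ q : Fin N,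
          (pd Cas p z * pd Cas q z *
            (lam i l p z * pd (lam j k q) l z + lam k l p z * pd (lam i j q) l z
              + lam j l p z * pd (lam k i q) l z)))
          = ∑ p : Fin N, ∑ q : Fin N, (pd Cas p z * pd Cas q z *
              (∑ l : Fin N, (lam i l p z * pd (lam j k q) l z + lam k l p z * pd (lam i j q) l z
                + lam j l p z * pd (lam k i q) l z))) := by
        rw [Finset.sum_comm]
        refine Finset.sum_congr rfl fun p _ => ?_
        rw [Finset.sum_comm]
        refine Finset.sum_congr rfl fun q _ => ?_
        rw [Finset.mul_sum]
      rw [step]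
      refine sum_antisym_zero _ fun p q => ?_
      linear_combination (pd Cas p z * pd Cas q z) * key p q
    have hG2 : (∑ l : Fin N, ∑ p : Fin N, ∑ q : Fin N,
        (pd Cas p z * pd (pd Cas q) l z *
          (lam i l p z * lam j k q z + lam k l p z * lam i j q z
            + lam j l p z * lam k i q z))) = 0 := by
      have step : (∑ l : Fin N, ∑ p : Fin N, ∑ q : Fin N,
          (pd Cas p z * pd (pd Cas q) l z *
            (lam i l p z * lam j k q z + lam k l p z * lam i j q z
              + lam j l p z * lam k i q z)))
          = ∑ l : Fin N, ∑ q : Fin N, (pd (pd Cas q) l z *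
              (∑ p : Fin N, pd Cas p z *
                (lam i l p z * lam j k q z + lam k l p z * lam i j q z
                  + lam j l p z * lam k i q z))) := by
        refine Finset.sum_congr rfl fun l _ => ?_
        rw [Finset.sum_comm]
        refine Finset.sum_congr rfl fun q _ => ?_
        rw [Finset.mul_sum]
        exact Finset.sum_congr rfl fun p _ => by ring
      rw [step]
      have hK : ∀ l q : Fin N,
          (∑ p : Fin N, pd Cas p z *
            (lam i l p z * lam j k q z + lam k l p z * lam i j q z
              + lam j l p z * lam k i q z))
          = -(∑ p : Fin N, pd Cas p z *
            (lam i q p z * lam j k l z + lam k q p z * lam i j l z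
              + lam j q p z * lam k i l z)) := by
        intro l q
        rw [← Finset.sum_neg_distrib]
        refine Finset.sum_congr rfl fun p _ => ?_
        linear_combination (pd Cas p z) * hX l p q
      refine sum_antisym_zero _ fun l q => ?_
      rw [show pd (pd Cas l) q z = pd (pd Cas q) l z from pd_pd_symm Cas hCas z l q]
      linear_combination (pd (pd Cas q) l z) * hK l q
    rw [expand]
    simp only [Finset.sum_add_distrib]
    rw [hG1, hG2]
    ring
  refine ⟨part1, part2, ?_⟩

  -- Part 3
  intro A B D hA hB hD z
  have hnam' : ∀ (X Y : (Fin N → ℝ) → ℝ) (w : Fin N → ℝ), nambu lam X Y Cas w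
      = ∑ a : Fin N, ∑ b : Fin N, J a b w * pd X a w * pd Y b w := by
    intro X Y w
    simp only [nambu]
    refine Finset.sum_congr rfl fun a _ => Finset.sum_congr rfl fun b _ => ?_
    rw [hJ a b w, Finset.sum_mul, Finset.sum_mul]
    exact Finset.sum_congr rfl fun t _ => by ring
  have hnamfun : ∀ X Y : (Fin N → ℝ) → ℝ, nambu lam X Y Cas
      = fun w => ∑ a : Fin N, ∑ b : Fin N, J a b w * pd X a w * pd Y b w :=
    fun X Y => funext (hnam' X Y)
  have hpdnam : ∀ (X Y : (Fin N → ℝ) → ℝ), ContDiff ℝ (⊤ : ℕ∞) X → ContDiff ℝ (⊤ : ℕ∞) Y → ∀ c : Fin N,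
      pd (nambu lam X Y Cas) c z = ∑ a : Fin N, ∑ b : Fin N,
        (pd (J a b) c z * pd X a z * pd Y b z + J a b z * pd (pd X a) c z * pd Y b z
          + J a b z * pd X a z * pd (pd Y b) c z) := by
    intro X Y hX hY c
    have dX : ∀ (a : Fin N) (w : Fin N → ℝ), DifferentiableAt ℝ (pd X a) w :=
      fun a w => ((contDiff_pd X hX a).differentiable (by simp)) w
    have dXf : ∀ (w : Fin N → ℝ), DifferentiableAt ℝ X w := fun w => (hX.differentiable (by simp)) w
    have dY : ∀ (a : Fin N) (w : Fin N → ℝ), DifferentiableAt ℝ (pd Y a) w :=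
      fun a w => ((contDiff_pd Y hY a).differentiable (by simp)) w
    rw [hnamfun X Y]
    rw [pd_sum Finset.univ (fun a => fun w => ∑ b : Fin N, J a b w * pd X a w * pd Y b w) c z
      (fun a _ => DifferentiableAt.fun_sum (fun b _ => ((hJd a b z).mul (dX a z)).mul (dY b z)))]
    refine Finset.sum_congr rfl fun a _ => ?_
    rw [pd_sum Finset.univ (fun b => fun w => J a b w * pd X a w * pd Y b w) c z
      (fun b _ => ((hJd a b z).mul (dX a z)).mul (dY b z))]
    refine Finset.sum_congr rfl fun b _ => ?_
    have hm1 : pd (fun w => J a b w * pd X a w * pd Y b w) c z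
        = pd (fun w => J a b w * pd X a w) c z * pd Y b z
          + (J a b z * pd X a z) * pd (pd Y b) c z :=
      pd_mul _ _ _ _ ((hJd a b z).mul (dX a z)) (dY b z)
    have hm2 : pd (fun w => J a b w * pd X a w) c z
        = pd (J a b) c z * pd X a z + J a b z * pd (pd X a) c z :=
      pd_mul _ _ _ _ (hJd a b z) (dX a z)
    rw [hm1, hm2]
    ring
  have houter : ∀ (X W : (Fin N → ℝ) → ℝ), nambu lam X W Cas z
      = ∑ c : Fin N, (pd X c z * ∑ t : Fin N, J c t z * pd W t z) := by
    intro X W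
    rw [hnam' X W z]
    refine Finset.sum_congr rfl fun c _ => ?_
    rw [Finset.mul_sum]
    exact Finset.sum_congr rfl fun t _ => by ring
  -- row-flip at sum level
  have flip : ∀ (W : (Fin N → ℝ) → ℝ) (b : Fin N),
      (∑ a : Fin N, J a b z * pd W a z) = -(∑ a : Fin N, J b a z * pd W a z) := by
    intro W b
    rw [← Finset.sum_neg_distrib]
    exact Finset.sum_congr rfl fun a _ => by rw [part1 a b z]; ring
  -- expansions of the three double brackets
  have e1 : nambu lam (nambu lam A B Cas) D Cas z
      = (∑ c : Fin N, ∑ a : Fin N, ∑ b : Fin N,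
          pd (J a b) c z * pd A a z * pd B b z * (∑ t : Fin N, J c t z * pd D t z))
      + (∑ c : Fin N, ∑ a : Fin N, ∑ b : Fin N,
          J a b z * pd (pd A a) c z * pd B b z * (∑ t : Fin N, J c t z * pd D t z))
      + (∑ c : Fin N, ∑ a : Fin N, ∑ b : Fin N,
          J a b z * pd A a z * pd (pd B b) c z * (∑ t : Fin N, J c t z * pd D t z)) := by
    rw [houter (nambu lam A B Cas) D, ← Finset.sum_add_distrib, ← Finset.sum_add_distrib]
    refine Finset.sum_congr rfl fun c _ => ?_
    rw [hpdnam A B hA hB c, ← Finset.sum_add_distrib, ← Finset.sum_add_distrib, Finset.sum_mul]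
    refine Finset.sum_congr rfl fun a _ => ?_
    rw [← Finset.sum_add_distrib, ← Finset.sum_add_distrib, Finset.sum_mul]
    refine Finset.sum_congr rfl fun b _ => ?_
    ring
  have e2 : nambu lam (nambu lam D A Cas) B Cas z
      = (∑ c : Fin N, ∑ a : Fin N, ∑ b : Fin N,
          pd (J a b) c z * pd D a z * pd A b z * (∑ t : Fin N, J c t z * pd B t z))
      + (∑ c : Fin N, ∑ a : Fin N, ∑ b : Fin N,
          J a b z * pd (pd D a) c z * pd A b z * (∑ t : Fin N, J c t z * pd B t z))
      + (∑ c : Fin N, ∑ a : Fin N, ∑ b : Fin N,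
          J a b z * pd D a z * pd (pd A b) c z * (∑ t : Fin N, J c t z * pd B t z)) := by
    rw [houter (nambu lam D A Cas) B, ← Finset.sum_add_distrib, ← Finset.sum_add_distrib]
    refine Finset.sum_congr rfl fun c _ => ?_
    rw [hpdnam D A hD hA c, ← Finset.sum_add_distrib, ← Finset.sum_add_distrib, Finset.sum_mul]
    refine Finset.sum_congr rfl fun a _ => ?_
    rw [← Finset.sum_add_distrib, ← Finset.sum_add_distrib, Finset.sum_mul]
    refine Finset.sum_congr rfl fun b _ => ?_
    ring
  have e3 : nambu lam (nambu lam B D Cas) A Cas z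
      = (∑ c : Fin N, ∑ a : Fin N, ∑ b : Fin N,
          pd (J a b) c z * pd B a z * pd D b z * (∑ t : Fin N, J c t z * pd A t z))
      + (∑ c : Fin N, ∑ a : Fin N, ∑ b : Fin N,
          J a b z * pd (pd B a) c z * pd D b z * (∑ t : Fin N, J c t z * pd A t z))
      + (∑ c : Fin N, ∑ a : Fin N, ∑ b : Fin N,
          J a b z * pd B a z * pd (pd D b) c z * (∑ t : Fin N, J c t z * pd A t z)) := by
    rw [houter (nambu lam B D Cas) A, ← Finset.sum_add_distrib, ← Finset.sum_add_distrib]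
    refine Finset.sum_congr rfl fun c _ => ?_
    rw [hpdnam B D hB hD c, ← Finset.sum_add_distrib, ← Finset.sum_add_distrib, Finset.sum_mul]
    refine Finset.sum_congr rfl fun a _ => ?_
    rw [← Finset.sum_add_distrib, ← Finset.sum_add_distrib, Finset.sum_mul]
    refine Finset.sum_congr rfl fun b _ => ?_
    ring
  -- the ∂J terms sum to zero by Part 2
  have hW : ∀ a b l : Fin N,
      (∑ c : Fin N, J c l z * pd (J a b) c z) + (∑ c : Fin N, J c b z * pd (J l a) c z)
        + (∑ c : Fin N, J c a z * pd (J b l) c z) = 0 := by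
    intro a b l
    have h := part2 z l a b
    simp only [Finset.sum_add_distrib] at h
    have c1 : (∑ c : Fin N, J c l z * pd (J a b) c z)
        = -∑ c : Fin N, J l c z * pd (J a b) c z := by
      rw [← Finset.sum_neg_distrib]
      exact Finset.sum_congr rfl fun c _ => by rw [part1 c l z]; ring
    have c2 : (∑ c : Fin N, J c b z * pd (J l a) c z)
        = -∑ c : Fin N, J b c z * pd (J l a) c z := by
      rw [← Finset.sum_neg_distrib]
      exact Finset.sum_congr rfl fun c _ => by rw [part1 c b z]; ring
    have c3 : (∑ c : Fin N, J c a z * pd (J b l) c z)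
        = -∑ c : Fin N, J a c z * pd (J b l) c z := by
      rw [← Finset.sum_neg_distrib]
      exact Finset.sum_congr rfl fun c _ => by rw [part1 c a z]; ring
    linarith [h, c1, c2, c3]
  -- reshape the ∂J triple sums
  have v1 : (∑ c : Fin N, ∑ a : Fin N, ∑ b : Fin N,
        pd (J a b) c z * pd A a z * pd B b z * (∑ t : Fin N, J c t z * pd D t z))
      = ∑ a : Fin N, ∑ b : Fin N, ∑ l : Fin N,
          (pd A a z * pd B b z * pd D l z * (∑ c : Fin N, J c l z * pd (J a b) c z)) := by
    calc (∑ c : Fin N, ∑ a : Fin N, ∑ b : Fin N,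
          pd (J a b) c z * pd A a z * pd B b z * (∑ t : Fin N, J c t z * pd D t z))
        = ∑ c : Fin N, ∑ a : Fin N, ∑ b : Fin N, ∑ t : Fin N,
            pd (J a b) c z * pd A a z * pd B b z * (J c t z * pd D t z) :=
          Finset.sum_congr rfl fun c _ => Finset.sum_congr rfl fun a _ =>
            Finset.sum_congr rfl fun b _ => by rw [Finset.mul_sum]
      _ = ∑ a : Fin N, ∑ b : Fin N, ∑ t : Fin N, ∑ c : Fin N,
            pd (J a b) c z * pd A a z * pd B b z * (J c t z * pd D t z) := sum4_cin _
      _ = ∑ a : Fin N, ∑ b : Fin N, ∑ l : Fin N,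
            (pd A a z * pd B b z * pd D l z * (∑ c : Fin N, J c l z * pd (J a b) c z)) :=
          Finset.sum_congr rfl fun a _ => Finset.sum_congr rfl fun b _ =>
            Finset.sum_congr rfl fun t _ => by
              rw [Finset.mul_sum]
              exact Finset.sum_congr rfl fun c _ => by ring
  have v2 : (∑ c : Fin N, ∑ a : Fin N, ∑ b : Fin N,
        pd (J a b) c z * pd D a z * pd A b z * (∑ t : Fin N, J c t z * pd B t z))
      = ∑ a : Fin N, ∑ b : Fin N, ∑ l : Fin N,
          (pd D a z * pd A b z * pd B l z * (∑ c : Fin N, J c l z * pd (J a b) c z)) := by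
    calc (∑ c : Fin N, ∑ a : Fin N, ∑ b : Fin N,
          pd (J a b) c z * pd D a z * pd A b z * (∑ t : Fin N, J c t z * pd B t z))
        = ∑ c : Fin N, ∑ a : Fin N, ∑ b : Fin N, ∑ t : Fin N,
            pd (J a b) c z * pd D a z * pd A b z * (J c t z * pd B t z) :=
          Finset.sum_congr rfl fun c _ => Finset.sum_congr rfl fun a _ =>
            Finset.sum_congr rfl fun b _ => by rw [Finset.mul_sum]
      _ = ∑ a : Fin N, ∑ b : Fin N, ∑ t : Fin N, ∑ c : Fin N,
            pd (J a b) c z * pd D a z * pd A b z * (J c t z * pd B t z) := sum4_cin _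
      _ = ∑ a : Fin N, ∑ b : Fin N, ∑ l : Fin N,
            (pd D a z * pd A b z * pd B l z * (∑ c : Fin N, J c l z * pd (J a b) c z)) :=
          Finset.sum_congr rfl fun a _ => Finset.sum_congr rfl fun b _ =>
            Finset.sum_congr rfl fun t _ => by
              rw [Finset.mul_sum]
              exact Finset.sum_congr rfl fun c _ => by ring
  have v3 : (∑ c : Fin N, ∑ a : Fin N, ∑ b : Fin N,
        pd (J a b) c z * pd B a z * pd D b z * (∑ t : Fin N, J c t z * pd A t z))
      = ∑ a : Fin N, ∑ b : Fin N, ∑ l : Fin N,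
          (pd B a z * pd D b z * pd A l z * (∑ c : Fin N, J c l z * pd (J a b) c z)) := by
    calc (∑ c : Fin N, ∑ a : Fin N, ∑ b : Fin N,
          pd (J a b) c z * pd B a z * pd D b z * (∑ t : Fin N, J c t z * pd A t z))
        = ∑ c : Fin N, ∑ a : Fin N, ∑ b : Fin N, ∑ t : Fin N,
            pd (J a b) c z * pd B a z * pd D b z * (J c t z * pd A t z) :=
          Finset.sum_congr rfl fun c _ => Finset.sum_congr rfl fun a _ =>
            Finset.sum_congr rfl fun b _ => by rw [Finset.mul_sum]
      _ = ∑ a : Fin N, ∑ b : Fin N, ∑ t : Fin N, ∑ c : Fin N,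
            pd (J a b) c z * pd B a z * pd D b z * (J c t z * pd A t z) := sum4_cin _
      _ = ∑ a : Fin N, ∑ b : Fin N, ∑ l : Fin N,
            (pd B a z * pd D b z * pd A l z * (∑ c : Fin N, J c l z * pd (J a b) c z)) :=
          Finset.sum_congr rfl fun a _ => Finset.sum_congr rfl fun b _ =>
            Finset.sum_congr rfl fun t _ => by
              rw [Finset.mul_sum]
              exact Finset.sum_congr rfl fun c _ => by ring
  have zv : (∑ c : Fin N, ∑ a : Fin N, ∑ b : Fin N,
        pd (J a b) c z * pd A a z * pd B b z * (∑ t : Fin N, J c t z * pd D t z))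
      + (∑ c : Fin N, ∑ a : Fin N, ∑ b : Fin N,
        pd (J a b) c z * pd D a z * pd A b z * (∑ t : Fin N, J c t z * pd B t z))
      + (∑ c : Fin N, ∑ a : Fin N, ∑ b : Fin N,
        pd (J a b) c z * pd B a z * pd D b z * (∑ t : Fin N, J c t z * pd A t z)) = 0 := by
    rw [v1, v2, v3]
    have r2 : (∑ a : Fin N, ∑ b : Fin N, ∑ l : Fin N,
          (pd D a z * pd A b z * pd B l z * (∑ c : Fin N, J c l z * pd (J a b) c z)))
        = ∑ a : Fin N, ∑ b : Fin N, ∑ l : Fin N,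
          (pd D l z * pd A a z * pd B b z * (∑ c : Fin N, J c b z * pd (J l a) c z)) :=
      (sum_rot3 (fun a b l => pd D a z * pd A b z * pd B l z
          * (∑ c : Fin N, J c l z * pd (J a b) c z))).trans
        (sum_rot3 (fun a b l => pd D b z * pd A l z * pd B a z
          * (∑ c : Fin N, J c a z * pd (J b l) c z)))
    have r3 : (∑ a : Fin N, ∑ b : Fin N, ∑ l : Fin N,
          (pd B a z * pd D b z * pd A l z * (∑ c : Fin N, J c l z * pd (J a b) c z)))
        = ∑ a : Fin N, ∑ b : Fin N, ∑ l : Fin N,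
          (pd B b z * pd D l z * pd A a z * (∑ c : Fin N, J c a z * pd (J b l) c z)) :=
      sum_rot3 (fun a b l => pd B a z * pd D b z * pd A l z
        * (∑ c : Fin N, J c l z * pd (J a b) c z))
    rw [r2, r3]
    rw [← Finset.sum_add_distrib, ← Finset.sum_add_distrib]
    refine Finset.sum_eq_zero fun a _ => ?_
    rw [← Finset.sum_add_distrib, ← Finset.sum_add_distrib]
    refine Finset.sum_eq_zero fun b _ => ?_
    rw [← Finset.sum_add_distrib, ← Finset.sum_add_distrib]
    refine Finset.sum_eq_zero fun l _ => ?_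
    linear_combination (pd A a z * pd B b z * pd D l z) * hW a b l
  -- Hessian-pair cancellations
  have z1 : (∑ c : Fin N, ∑ a : Fin N, ∑ b : Fin N,
        J a b z * pd (pd A a) c z * pd B b z * (∑ t : Fin N, J c t z * pd D t z))
      + (∑ c : Fin N, ∑ a : Fin N, ∑ b : Fin N,
        J a b z * pd D a z * pd (pd A b) c z * (∑ t : Fin N, J c t z * pd B t z)) = 0 := by
    have u1 : (∑ c : Fin N, ∑ a : Fin N, ∑ b : Fin N,
          J a b z * pd (pd A a) c z * pd B b z * (∑ t : Fin N, J c t z * pd D t z))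
        = ∑ c : Fin N, ∑ a : Fin N, (pd (pd A a) c z * (∑ b : Fin N, J a b z * pd B b z)
            * (∑ t : Fin N, J c t z * pd D t z)) :=
      Finset.sum_congr rfl fun c _ => Finset.sum_congr rfl fun a _ => by
        calc (∑ b : Fin N, J a b z * pd (pd A a) c z * pd B b z * (∑ t : Fin N, J c t z * pd D t z))
            = ∑ b : Fin N, pd (pd A a) c z * (J a b z * pd B b z)
                * (∑ t : Fin N, J c t z * pd D t z) :=
              Finset.sum_congr rfl fun b _ => by ring
          _ = pd (pd A a) c z * (∑ b : Fin N, J a b z * pd B b z)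
                * (∑ t : Fin N, J c t z * pd D t z) := sum_scale _ _ _
    have u4 : (∑ c : Fin N, ∑ a : Fin N, ∑ b : Fin N,
          J a b z * pd D a z * pd (pd A b) c z * (∑ t : Fin N, J c t z * pd B t z))
        = ∑ c : Fin N, ∑ b : Fin N, (pd (pd A b) c z * (-(∑ a : Fin N, J b a z * pd D a z))
            * (∑ t : Fin N, J c t z * pd B t z)) := by
      refine Finset.sum_congr rfl fun c _ => ?_
      rw [Finset.sum_comm]
      refine Finset.sum_congr rfl fun b _ => ?_
      calc (∑ a : Fin N, J a b z * pd D a z * pd (pd A b) c z * (∑ t : Fin N, J c t z * pd B t z))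
          = ∑ a : Fin N, pd (pd A b) c z * (J a b z * pd D a z)
              * (∑ t : Fin N, J c t z * pd B t z) :=
            Finset.sum_congr rfl fun a _ => by ring
        _ = pd (pd A b) c z * (∑ a : Fin N, J a b z * pd D a z)
              * (∑ t : Fin N, J c t z * pd B t z) := sum_scale _ _ _
        _ = pd (pd A b) c z * (-(∑ a : Fin N, J b a z * pd D a z))
              * (∑ t : Fin N, J c t z * pd B t z) := by rw [flip D b]
    rw [u1, u4, ← Finset.sum_add_distrib]
    have comb : ∀ c : Fin N,
        (∑ a : Fin N, (pd (pd A a) c z * (∑ b : Fin N, J a b z * pd B b z)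
            * (∑ t : Fin N, J c t z * pd D t z)))
        + (∑ b : Fin N, (pd (pd A b) c z * (-(∑ a : Fin N, J b a z * pd D a z))
            * (∑ t : Fin N, J c t z * pd B t z)))
        = ∑ a : Fin N, ((pd (pd A a) c z * (∑ b : Fin N, J a b z * pd B b z)
            * (∑ t : Fin N, J c t z * pd D t z))
          + (pd (pd A a) c z * (-(∑ b : Fin N, J a b z * pd D b z))
            * (∑ t : Fin N, J c t z * pd B t z))) := by
      intro c
      rw [Finset.sum_add_distrib]
    rw [Finset.sum_congr rfl fun c _ => comb c]
    refine sum_antisym_zero _ fun c a => ?_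
    rw [pd_pd_symm A hA z a c]
    ring
  have z2 : (∑ c : Fin N, ∑ a : Fin N, ∑ b : Fin N,
        J a b z * pd A a z * pd (pd B b) c z * (∑ t : Fin N, J c t z * pd D t z))
      + (∑ c : Fin N, ∑ a : Fin N, ∑ b : Fin N,
        J a b z * pd (pd B a) c z * pd D b z * (∑ t : Fin N, J c t z * pd A t z)) = 0 := by
    have u2 : (∑ c : Fin N, ∑ a : Fin N, ∑ b : Fin N,
          J a b z * pd A a z * pd (pd B b) c z * (∑ t : Fin N, J c t z * pd D t z))
        = ∑ c : Fin N, ∑ b : Fin N, (pd (pd B b) c z * (-(∑ a : Fin N, J b a z * pd A a z))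
            * (∑ t : Fin N, J c t z * pd D t z)) := by
      refine Finset.sum_congr rfl fun c _ => ?_
      rw [Finset.sum_comm]
      refine Finset.sum_congr rfl fun b _ => ?_
      calc (∑ a : Fin N, J a b z * pd A a z * pd (pd B b) c z * (∑ t : Fin N, J c t z * pd D t z))
          = ∑ a : Fin N, pd (pd B b) c z * (J a b z * pd A a z)
              * (∑ t : Fin N, J c t z * pd D t z) :=
            Finset.sum_congr rfl fun a _ => by ring
        _ = pd (pd B b) c z * (∑ a : Fin N, J a b z * pd A a z)
              * (∑ t : Fin N, J c t z * pd D t z) := sum_scale _ _ _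
        _ = pd (pd B b) c z * (-(∑ a : Fin N, J b a z * pd A a z))
              * (∑ t : Fin N, J c t z * pd D t z) := by rw [flip A b]
    have u5 : (∑ c : Fin N, ∑ a : Fin N, ∑ b : Fin N,
          J a b z * pd (pd B a) c z * pd D b z * (∑ t : Fin N, J c t z * pd A t z))
        = ∑ c : Fin N, ∑ a : Fin N, (pd (pd B a) c z * (∑ b : Fin N, J a b z * pd D b z)
            * (∑ t : Fin N, J c t z * pd A t z)) :=
      Finset.sum_congr rfl fun c _ => Finset.sum_congr rfl fun a _ => by
        calc (∑ b : Fin N, J a b z * pd (pd B a) c z * pd D b z * (∑ t : Fin N, J c t z * pd A t z))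
            = ∑ b : Fin N, pd (pd B a) c z * (J a b z * pd D b z)
                * (∑ t : Fin N, J c t z * pd A t z) :=
              Finset.sum_congr rfl fun b _ => by ring
          _ = pd (pd B a) c z * (∑ b : Fin N, J a b z * pd D b z)
                * (∑ t : Fin N, J c t z * pd A t z) := sum_scale _ _ _
    rw [u2, u5, ← Finset.sum_add_distrib]
    have comb : ∀ c : Fin N,
        (∑ b : Fin N, (pd (pd B b) c z * (-(∑ a : Fin N, J b a z * pd A a z))
            * (∑ t : Fin N, J c t z * pd D t z)))
        + (∑ a : Fin N, (pd (pd B a) c z * (∑ b : Fin N, J a b z * pd D b z)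
            * (∑ t : Fin N, J c t z * pd A t z)))
        = ∑ a : Fin N, ((pd (pd B a) c z * (-(∑ b : Fin N, J a b z * pd A b z))
            * (∑ t : Fin N, J c t z * pd D t z))
          + (pd (pd B a) c z * (∑ b : Fin N, J a b z * pd D b z)
            * (∑ t : Fin N, J c t z * pd A t z))) := by
      intro c
      rw [Finset.sum_add_distrib]
    rw [Finset.sum_congr rfl fun c _ => comb c]
    refine sum_antisym_zero _ fun c a => ?_
    rw [pd_pd_symm B hB z a c]
    ring
  have z3 : (∑ c : Fin N, ∑ a : Fin N, ∑ b : Fin N,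
        J a b z * pd (pd D a) c z * pd A b z * (∑ t : Fin N, J c t z * pd B t z))
      + (∑ c : Fin N, ∑ a : Fin N, ∑ b : Fin N,
        J a b z * pd B a z * pd (pd D b) c z * (∑ t : Fin N, J c t z * pd A t z)) = 0 := by
    have u3 : (∑ c : Fin N, ∑ a : Fin N, ∑ b : Fin N,
          J a b z * pd (pd D a) c z * pd A b z * (∑ t : Fin N, J c t z * pd B t z))
        = ∑ c : Fin N, ∑ a : Fin N, (pd (pd D a) c z * (∑ b : Fin N, J a b z * pd A b z)
            * (∑ t : Fin N, J c t z * pd B t z)) :=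
      Finset.sum_congr rfl fun c _ => Finset.sum_congr rfl fun a _ => by
        calc (∑ b : Fin N, J a b z * pd (pd D a) c z * pd A b z * (∑ t : Fin N, J c t z * pd B t z))
            = ∑ b : Fin N, pd (pd D a) c z * (J a b z * pd A b z)
                * (∑ t : Fin N, J c t z * pd B t z) :=
              Finset.sum_congr rfl fun b _ => by ring
          _ = pd (pd D a) c z * (∑ b : Fin N, J a b z * pd A b z)
                * (∑ t : Fin N, J c t z * pd B t z) := sum_scale _ _ _
    have u6 : (∑ c : Fin N, ∑ a : Fin N, ∑ b : Fin N,
          J a b z * pd B a z * pd (pd D b) c z * (∑ t : Fin N, J c t z * pd A t z))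
        = ∑ c : Fin N, ∑ b : Fin N, (pd (pd D b) c z * (-(∑ a : Fin N, J b a z * pd B a z))
            * (∑ t : Fin N, J c t z * pd A t z)) := by
      refine Finset.sum_congr rfl fun c _ => ?_
      rw [Finset.sum_comm]
      refine Finset.sum_congr rfl fun b _ => ?_
      calc (∑ a : Fin N, J a b z * pd B a z * pd (pd D b) c z * (∑ t : Fin N, J c t z * pd A t z))
          = ∑ a : Fin N, pd (pd D b) c z * (J a b z * pd B a z)
              * (∑ t : Fin N, J c t z * pd A t z) :=
            Finset.sum_congr rfl fun a _ => by ring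
        _ = pd (pd D b) c z * (∑ a : Fin N, J a b z * pd B a z)
              * (∑ t : Fin N, J c t z * pd A t z) := sum_scale _ _ _
        _ = pd (pd D b) c z * (-(∑ a : Fin N, J b a z * pd B a z))
              * (∑ t : Fin N, J c t z * pd A t z) := by rw [flip B b]
    rw [u3, u6, ← Finset.sum_add_distrib]
    have comb : ∀ c : Fin N,
        (∑ a : Fin N, (pd (pd D a) c z * (∑ b : Fin N, J a b z * pd A b z)
            * (∑ t : Fin N, J c t z * pd B t z)))
        + (∑ b : Fin N, (pd (pd D b) c z * (-(∑ a : Fin N, J b a z * pd B a z))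
            * (∑ t : Fin N, J c t z * pd A t z)))
        = ∑ a : Fin N, ((pd (pd D a) c z * (∑ b : Fin N, J a b z * pd A b z)
            * (∑ t : Fin N, J c t z * pd B t z))
          + (pd (pd D a) c z * (-(∑ b : Fin N, J a b z * pd B b z))
            * (∑ t : Fin N, J c t z * pd A t z))) := by
      intro c
      rw [Finset.sum_add_distrib]
    rw [Finset.sum_congr rfl fun c _ => comb c]
    refine sum_antisym_zero _ fun c a => ?_
    rw [pd_pd_symm D hD z a c]
    ring
  rw [e1, e2, e3]
  linarith [zv, z1, z2, z3]
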